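/- Under the same assumptions as the rigid-inclusion energy lemma, but with w_V ∈ H²(Ω \ D̄) solving the cavity problem (homogeneous Neumann conditions on ∂D) and w₀ the reference solution, one has ∫_D P∇²w₀ · ∇²w₀ ≤ W_V − W₀, where W_V = ∫_{Ω\D̄} P∇²w_V·∇²w_V and W₀ = ∫_Ω P∇²w₀·∇²w₀. -/

import Mathlib

/-!
Testing both weak formulations with `w₀` shows that the mixed energy
`∫_{Ω\D̄} P∇²w_V·∇²w₀` equals `W₀`. Since `P` is nonnegative on symmetric matrices and Hessians
are symmetric, expanding `P(∇²w_V - ∇²w₀)·(∇²w_V - ∇²w₀) ≥ 0` gives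
`2W₀ ≤ W_V + ∫_{Ω\D̄} P∇²w₀·∇²w₀`, while nonnegativity of the energy density of `w₀` gives
`∫_D P∇²w₀·∇²w₀ + ∫_{Ω\D̄} P∇²w₀·∇²w₀ ≤ W₀`. Adding the two inequalities proves the claim.
-/

open MeasureTheory

noncomputable section

abbrev E2 := EuclideanSpace ℝ (Fin 2)

/-- The Hessian matrix `∇²w` of a scalar field on the plane. -/
def hess (w : E2 → ℝ) (x : E2) : Matrix (Fin 2) (Fin 2) ℝ :=
  Matrix.of fun i j =>
    fderiv ℝ (fun y => fderiv ℝ w y (EuclideanSpace.single j 1)) x (EuclideanSpace.single i 1)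

/-- Application of the (fourth-order) plate tensor `P` to a `2×2` matrix. -/
def Papp (P : E2 → Fin 2 → Fin 2 → Fin 2 → Fin 2 → ℝ) (x : E2)
    (A : Matrix (Fin 2) (Fin 2) ℝ) : Matrix (Fin 2) (Fin 2) ℝ :=
  Matrix.of fun i j => ∑ k, ∑ l, P x i j k l * A k l

/-- Frobenius product of `2×2` matrices. -/
def mdot (A B : Matrix (Fin 2) (Fin 2) ℝ) : ℝ := ∑ i, ∑ j, A i j * B i j

/-- The bilinear strain energy `∫_S P∇²w · ∇²v`. -/
def plateEnergy (P : E2 → Fin 2 → Fin 2 → Fin 2 → Fin 2 → ℝ) (S : Set E2)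
    (w v : E2 → ℝ) : ℝ :=
  ∫ x in S, mdot (Papp P x (hess w x)) (hess v x)

lemma hess_apply_eq_fderiv_fderiv {w : E2 → ℝ} (hw : ContDiff ℝ 2 w) (x : E2) (i j : Fin 2) :
    hess w x i j =
      fderiv ℝ (fderiv ℝ w) x (EuclideanSpace.single i 1) (EuclideanSpace.single j 1) := by
  have hd : DifferentiableAt ℝ (fderiv ℝ w) x :=
    (hw.fderiv_right (m := 1) le_rfl).differentiable one_ne_zero x
  have h := hd.hasFDerivAt.clm_apply (hasFDerivAt_const (EuclideanSpace.single j 1) x)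
  simp only [ContinuousLinearMap.comp_zero, zero_add] at h
  exact congrArg (· (EuclideanSpace.single i 1)) h.fderiv

lemma hess_isSymm {w : E2 → ℝ} (hw : ContDiff ℝ 2 w) (x : E2) : (hess w x).IsSymm := by
  have hs : IsSymmSndFDerivAt ℝ w x := hw.contDiffAt.isSymmSndFDerivAt (by simp)
  ext i j
  rw [Matrix.transpose_apply, hess_apply_eq_fderiv_fderiv hw, hess_apply_eq_fderiv_fderiv hw]
  exact hs _ _

lemma mdot_self_nonneg (A : Matrix (Fin 2) (Fin 2) ℝ) : 0 ≤ mdot A A :=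
  Finset.sum_nonneg fun i _ => Finset.sum_nonneg fun j _ => mul_self_nonneg (A i j)

section Tensor

variable (P : E2 → Fin 2 → Fin 2 → Fin 2 → Fin 2 → ℝ) (x : E2)

lemma mdot_Papp_comm (hP : ∀ i j k l, P x i j k l = P x k l i j)
    (A B : Matrix (Fin 2) (Fin 2) ℝ) : mdot (Papp P x A) B = mdot (Papp P x B) A := by
  simp only [mdot, Papp, Matrix.of_apply, Fin.sum_univ_two, hP]
  ring

lemma mdot_Papp_sub_sub (A B : Matrix (Fin 2) (Fin 2) ℝ) :
    mdot (Papp P x (A - B)) (A - B) = mdot (Papp P x A) A - mdot (Papp P x A) B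
      - mdot (Papp P x B) A + mdot (Papp P x B) B := by
  simp only [mdot, Papp, Matrix.of_apply, Fin.sum_univ_two, Matrix.sub_apply]
  ring

lemma mdot_Papp_self_nonneg {γ : ℝ} (hγ : 0 ≤ γ)
    (hPconv : ∀ A : Matrix (Fin 2) (Fin 2) ℝ, A.IsSymm → γ * mdot A A ≤ mdot (Papp P x A) A)
    (A : Matrix (Fin 2) (Fin 2) ℝ) (hA : A.IsSymm) : 0 ≤ mdot (Papp P x A) A :=
  (mul_nonneg hγ (mdot_self_nonneg A)).trans (hPconv A hA)

lemma two_mul_mdot_Papp_le (hP : ∀ i j k l, P x i j k l = P x k l i j)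
    (hpos : ∀ A : Matrix (Fin 2) (Fin 2) ℝ, A.IsSymm → 0 ≤ mdot (Papp P x A) A)
    {A B : Matrix (Fin 2) (Fin 2) ℝ} (hA : A.IsSymm) (hB : B.IsSymm) :
    2 * mdot (Papp P x A) B ≤ mdot (Papp P x A) A + mdot (Papp P x B) B := by
  have h := hpos (A - B) (hA.sub hB)
  rw [mdot_Papp_sub_sub, mdot_Papp_comm P x hP B A] at h
  linarith

end Tensor

/-- Where `f` is not integrable its integral is the junk value `0`, hence the sign condition. -/
lemma integral_le_of_le_of_integral_nonneg {α : Type*} [MeasurableSpace α] {μ : Measure α}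
    {f g : α → ℝ} (hfg : ∀ x, f x ≤ g x) (hg : Integrable g μ) (hg0 : 0 ≤ ∫ x, g x ∂μ) :
    ∫ x, f x ∂μ ≤ ∫ x, g x ∂μ := by
  by_cases hf : Integrable f μ
  · exact integral_mono hf hg hfg
  · rwa [integral_undef hf]

lemma setIntegral_add_setIntegral_le {α : Type*} [MeasurableSpace α] {μ : Measure α}
    {f : α → ℝ} {s t u : Set α} (hf : IntegrableOn f u μ) (hf0 : ∀ x, 0 ≤ f x)
    (hst : Disjoint s t) (hs : MeasurableSet s) (hsu : s ⊆ u) (htu : t ⊆ u) :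
    ∫ x in s, f x ∂μ + ∫ x in t, f x ∂μ ≤ ∫ x in u, f x ∂μ := by
  rw [add_comm, ← setIntegral_union hst.symm hs (hf.mono_set htu) (hf.mono_set hsu)]
  exact setIntegral_mono_set hf (.of_forall hf0) (.of_forall (Set.union_subset htu hsu))

section Energy

variable {P : E2 → Fin 2 → Fin 2 → Fin 2 → Fin 2 → ℝ}

lemma two_mul_plateEnergy_le {S : Set E2} (hP : ∀ x i j k l, P x i j k l = P x k l i j)
    (hpos : ∀ x, ∀ A : Matrix (Fin 2) (Fin 2) ℝ, A.IsSymm → 0 ≤ mdot (Papp P x A) A)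
    {w v : E2 → ℝ} (hw : ContDiff ℝ 2 w) (hv : ContDiff ℝ 2 v)
    (hintw : IntegrableOn (fun x => mdot (Papp P x (hess w x)) (hess w x)) S)
    (hintv : IntegrableOn (fun x => mdot (Papp P x (hess v x)) (hess v x)) S) :
    2 * plateEnergy P S w v ≤ plateEnergy P S w w + plateEnergy P S v v := by
  have hpoint (x : E2) :=
    two_mul_mdot_Papp_le P x (hP x) (hpos x) (hess_isSymm hw x) (hess_isSymm hv x)
  have hsum_nonneg (x : E2) :=
    add_nonneg (hpos x _ (hess_isSymm hw x)) (hpos x _ (hess_isSymm hv x))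
  rw [plateEnergy, plateEnergy, plateEnergy, ← integral_const_mul, ← integral_add hintw hintv]
  exact integral_le_of_le_of_integral_nonneg hpoint (hintw.add hintv)
    (integral_nonneg hsum_nonneg)

lemma plateEnergy_add_plateEnergy_le {s t u : Set E2}
    (hpos : ∀ x, ∀ A : Matrix (Fin 2) (Fin 2) ℝ, A.IsSymm → 0 ≤ mdot (Papp P x A) A)
    {w : E2 → ℝ} (hw : ContDiff ℝ 2 w)
    (hint : IntegrableOn (fun x => mdot (Papp P x (hess w x)) (hess w x)) u)
    (hst : Disjoint s t) (hs : MeasurableSet s) (hsu : s ⊆ u) (htu : t ⊆ u) :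
    plateEnergy P s w w + plateEnergy P t w w ≤ plateEnergy P u w w :=
  setIntegral_add_setIntegral_le hint (fun x => hpos x _ (hess_isSymm hw x)) hst hs hsu htu

end Energy

/-- The boundary couple field enters only through the load functional `ℓ` of the weak
formulations; the cavity problem has homogeneous Neumann conditions on `∂D`, so every test
function is admissible in it. -/
theorem energy_lemma_cavity_general
    (Ω D : Set E2)
    (hDopen : IsOpen D) (hDΩ : closure D ⊆ Ω)
    (P : E2 → Fin 2 → Fin 2 → Fin 2 → Fin 2 → ℝ) (γ : ℝ) (hγ : 0 < γ)
    (hPsym : ∀ x, ∀ i j k l, P x i j k l = P x k l i j ∧ P x i j k l = P x k l j i)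
    (hPconv : ∀ x, ∀ A : Matrix (Fin 2) (Fin 2) ℝ, A.IsSymm →
      γ * mdot A A ≤ mdot (Papp P x A) A)
    (ℓ : (E2 → ℝ) →ₗ[ℝ] ℝ)
    (w₀ wV : E2 → ℝ) (hw₀ : ContDiff ℝ 2 w₀) (hwV : ContDiff ℝ 2 wV)
    -- the reference solution: weak formulation of the Neumann problem in `Ω`
    (hweak₀ : ∀ v : E2 → ℝ, ContDiff ℝ 2 v → plateEnergy P Ω w₀ v = ℓ v)
    -- the cavity solution: weak formulation in `Ω \ D̄`
    (hweakV : ∀ v : E2 → ℝ, ContDiff ℝ 2 v →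
      plateEnergy P (Ω \ closure D) wV v = ℓ v)
    -- integrability of the energy densities
    (hint₀ : IntegrableOn (fun x => mdot (Papp P x (hess w₀ x)) (hess w₀ x)) Ω)
    (hintV : IntegrableOn (fun x => mdot (Papp P x (hess wV x)) (hess wV x)) (Ω \ closure D)) :
    plateEnergy P D w₀ w₀ ≤
      plateEnergy P (Ω \ closure D) wV wV - plateEnergy P Ω w₀ w₀ := by
  have hpos (x : E2) := mdot_Papp_self_nonneg P x hγ.le (hPconv x)
  have hmixed : plateEnergy P (Ω \ closure D) wV w₀ = plateEnergy P Ω w₀ w₀ :=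
    (hweakV w₀ hw₀).trans (hweak₀ w₀ hw₀).symm
  have hbound := two_mul_plateEnergy_le (fun x i j k l => (hPsym x i j k l).1) hpos hwV hw₀
    hintV (hint₀.mono_set Set.sdiff_subset)
  have hsplit := plateEnergy_add_plateEnergy_le hpos hw₀ hint₀
    (Set.disjoint_sdiff_right.mono_left subset_closure)
    hDopen.measurableSet (subset_closure.trans hDΩ) Set.sdiff_subset
  linarith

/-- Energy lemma for a cavity: `∫_D P∇²w₀·∇²w₀ ≤ W_V − W₀`, where
`W_V = ∫_{Ω\D̄} P∇²w_V·∇²w_V` and `W₀ = ∫_Ω P∇²w₀·∇²w₀` are the works exerted by the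
boundary couple field, represented by the linear load functional `ℓ` of its weak
formulation (the cavity problem has homogeneous Neumann conditions on `∂D`, so all
test functions are admissible). -/
theorem energy_lemma_cavity
    (Ω D : Set E2) (hΩopen : IsOpen Ω) (hΩconn : IsConnected Ω)
    (hΩbd : Bornology.IsBounded Ω)
    (hDopen : IsOpen D) (hDconn : IsConnected D) (hDΩ : closure D ⊆ Ω)
    (hconn : IsConnected (Ω \ closure D))
    (P : E2 → Fin 2 → Fin 2 → Fin 2 → Fin 2 → ℝ) (γ K : ℝ) (hγ : 0 < γ)
    (hPbd : ∀ x, ∀ i j k l, |P x i j k l| ≤ K)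
    (hPsym : ∀ x, ∀ i j k l, P x i j k l = P x k l i j ∧ P x i j k l = P x k l j i)
    (hPconv : ∀ x, ∀ A : Matrix (Fin 2) (Fin 2) ℝ, A.IsSymm →
      γ * mdot A A ≤ mdot (Papp P x A) A)
    (ℓ : (E2 → ℝ) →ₗ[ℝ] ℝ)
    (w₀ wV : E2 → ℝ) (hw₀ : ContDiff ℝ 2 w₀) (hwV : ContDiff ℝ 2 wV)
    -- the reference solution: weak formulation of the Neumann problem in `Ω`
    (hweak₀ : ∀ v : E2 → ℝ, ContDiff ℝ 2 v → plateEnergy P Ω w₀ v = ℓ v)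
    -- the cavity solution: weak formulation in `Ω \ D̄`
    (hweakV : ∀ v : E2 → ℝ, ContDiff ℝ 2 v →
      plateEnergy P (Ω \ closure D) wV v = ℓ v)
    -- integrability of the energy densities
    (hint₀ : IntegrableOn (fun x => mdot (Papp P x (hess w₀ x)) (hess w₀ x)) Ω)
    (hintV : IntegrableOn (fun x => mdot (Papp P x (hess wV x)) (hess wV x)) (Ω \ closure D)) :
    plateEnergy P D w₀ w₀ ≤
      plateEnergy P (Ω \ closure D) wV wV - plateEnergy P Ω w₀ w₀ :=
  energy_lemma_cavity_general Ω D hDopen hDΩ P γ hγ hPsym hPconv ℓ w₀ wV hw₀ hwV hweak₀ hweakV hint₀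
    hintV
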